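/- Let D be an oriented tree (an orientation of a tree). Then the set of extreme vertices of D is both the unique minimum hull set and the unique minimum geodetic set of D; consequently ohn(D) = ogn(D) = |ext(D)|, and moreover I(ext(D)) = V(D). -/

import Mathlib

variable {V : Type*}

/-- A directed walk from `u` to `v` given as its list of vertices. -/
def DiwalkFrom (A : V → V → Prop) (u v : V) (l : List V) : Prop :=
  l.Chain' A ∧ l.head? = some u ∧ l.getLast? = some v

/-- A `(u,v)`-geodesic: a directed walk of minimum length (hence a shortest directed path). -/
def IsGeodesic (A : V → V → Prop) (u v : V) (l : List V) : Prop :=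
  DiwalkFrom A u v l ∧ ∀ l', DiwalkFrom A u v l' → l.length ≤ l'.length

/-- The interval `I(S)`: `S` together with all vertices on geodesics between members of `S`. -/
def geoInterval (A : V → V → Prop) (S : Set V) : Set V :=
  S ∪ {w | ∃ u ∈ S, ∃ v ∈ S, ∃ l, IsGeodesic A u v l ∧ w ∈ l}

def GeoConvex (A : V → V → Prop) (S : Set V) : Prop := geoInterval A S = S

/-- The geodesic convex hull of `S`. -/
def geoHull (A : V → V → Prop) (S : Set V) : Set V := ⋂₀ {T | S ⊆ T ∧ GeoConvex A T}

def IsHullSet (A : V → V → Prop) (S : Set V) : Prop := geoHull A S = Set.univ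

def IsGeodeticSet (A : V → V → Prop) (S : Set V) : Prop := geoInterval A S = Set.univ

noncomputable def hullNumber (A : V → V → Prop) : ℕ :=
  sInf {n | ∃ S : Set V, S.Finite ∧ S.ncard = n ∧ IsHullSet A S}

noncomputable def geodeticNumber (A : V → V → Prop) : ℕ :=
  sInf {n | ∃ S : Set V, S.Finite ∧ S.ncard = n ∧ IsGeodeticSet A S}

def IsSource (A : V → V → Prop) (v : V) : Prop := ∀ u, ¬ A u v
def IsSink (A : V → V → Prop) (v : V) : Prop := ∀ w, ¬ A v w
def IsTransitiveVtx (A : V → V → Prop) (v : V) : Prop :=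
  (∃ u, A u v) ∧ (∃ w, A v w) ∧ ∀ u w, A u v → A v w → A u w
def IsExtremeVtx (A : V → V → Prop) (v : V) : Prop :=
  IsSource A v ∨ IsSink A v ∨ IsTransitiveVtx A v

/-- An oriented graph: an asymmetric (hence irreflexive) arc relation. -/
def Oriented (A : V → V → Prop) : Prop := ∀ u v, A u v → ¬ A v u

/-- Directed distance, `⊤` if there is no directed walk. -/
noncomputable def ddist (A : V → V → Prop) (u v : V) : ℕ∞ :=
  sInf {n : ℕ∞ | ∃ l, DiwalkFrom A u v l ∧ (l.length : ℕ∞) = n + 1}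

/-!
In an oriented forest a directed walk never turns back along the arc it just used, so it is a
path of the underlying forest, hence the unique one, and every directed walk is a geodesic.
Following arcs backwards and forwards from any vertex, which must stop because walks cannot repeat
vertices, reaches a source and a sink; the resulting walk is a geodesic through the vertex whose
ends are extreme, so the extreme vertices form a geodetic set. Conversely, an extreme vertex can
only be an end of a geodesic (a transitive vertex could be bypassed), so its complement is convex
and every hull set, in particular every geodetic set, contains all extreme vertices.
-/

section Digraph

variable {A : V → V → Prop} {u v w : V} {l : List V}

-- `List.Chain'` in the definition is a deprecated, non-reducible alias of `List.IsChain`.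
lemma diwalkFrom_iff :
    DiwalkFrom A u v l ↔ l.IsChain A ∧ l.head? = some u ∧ l.getLast? = some v :=
  Iff.rfl

namespace DiwalkFrom

lemma singleton (v : V) : DiwalkFrom A v v [v] :=
  diwalkFrom_iff.2 ⟨List.isChain_singleton v, rfl, rfl⟩

lemma cons {a : V} (h : DiwalkFrom A u v l) (ha : A a u) : DiwalkFrom A a v (a :: l) := by
  obtain ⟨hc, hu, hv⟩ := diwalkFrom_iff.1 h
  cases l with
  | nil => simp at hu
  | cons b l =>
    obtain rfl : b = u := by simpa using hu
    exact diwalkFrom_iff.2 ⟨hc.cons_cons ha, rfl, by simpa using hv⟩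

lemma append {l₂ : List V} (h₁ : DiwalkFrom A u w l) (h₂ : DiwalkFrom A w v (w :: l₂)) :
    DiwalkFrom A u v (l ++ l₂) := by
  obtain ⟨hc₁, hu, hw⟩ := diwalkFrom_iff.1 h₁
  obtain ⟨hc₂, -, hv⟩ := diwalkFrom_iff.1 h₂
  obtain ⟨l₁, rfl⟩ := List.getLast?_eq_some_iff.1 hw
  refine diwalkFrom_iff.2 ⟨?_, by simpa [List.head?_append] using hu, ?_⟩
  · rw [List.append_assoc, List.singleton_append, List.isChain_split]
    exact ⟨hc₁, hc₂⟩
  · cases l₂ <;> simp_all [List.getLast?_append]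

lemma reverse (h : DiwalkFrom A u v l) : DiwalkFrom (flip A) v u l.reverse := by
  obtain ⟨hc, hu, hv⟩ := diwalkFrom_iff.1 h
  exact diwalkFrom_iff.2 ⟨List.isChain_reverse.mpr hc, by rwa [List.head?_reverse],
    by rwa [List.getLast?_reverse]⟩

lemma shortcut {l₁ l₂ : List V} {a b c : V} (h : DiwalkFrom A u v (l₁ ++ a :: b :: c :: l₂))
    (hac : A a c) : DiwalkFrom A u v (l₁ ++ a :: c :: l₂) := by
  obtain ⟨hc, hu, hv⟩ := diwalkFrom_iff.1 h
  simp only [List.isChain_append_cons_cons, List.isChain_cons_cons] at hc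
  refine diwalkFrom_iff.2 ⟨List.isChain_append_cons_cons.mpr ⟨hc.1, hac, hc.2.2.2⟩, ?_, ?_⟩
  · simpa [List.head?_append] using hu
  · simpa [List.getLast?_append] using hv

end DiwalkFrom

lemma IsGeodesic.not_rel_of_eq_append {l₁ l₂ : List V} {a b c : V} (h : IsGeodesic A u v l)
    (hl : l = l₁ ++ a :: b :: c :: l₂) : ¬ A a c := fun hac => by
  subst hl
  have := h.2 _ (h.1.shortcut hac)
  simp at this

lemma IsExtremeVtx.eq_or_eq_of_mem_geodesic (hw : IsExtremeVtx A w) (hl : IsGeodesic A u v l)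
    (hwl : w ∈ l) : w = u ∨ w = v := by
  obtain ⟨hc, hu, hv⟩ := diwalkFrom_iff.1 hl.1
  obtain ⟨l₁, l₂, rfl⟩ := List.append_of_mem hwl
  rcases l₁.eq_nil_or_concat with rfl | ⟨l₁, a, rfl⟩
  · simp_all
  rcases l₂ with _ | ⟨c, l₂⟩
  · simp_all [List.getLast?_append]
  have hlc : l₁.concat a ++ w :: c :: l₂ = l₁ ++ a :: w :: c :: l₂ := by simp
  rw [hlc] at hc hl
  simp only [List.isChain_append_cons_cons, List.isChain_cons_cons] at hc
  obtain ⟨-, haw, hwc, -⟩ := hc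
  have hac := hl.not_rel_of_eq_append rfl
  rcases hw with hsrc | hsnk | ⟨-, -, htr⟩
  · exact (hsrc a haw).elim
  · exact (hsnk c hwc).elim
  · exact (hac (htr a c haw hwc)).elim

lemma exists_isSource_diwalkFrom [Fintype V] (hnodup : ∀ {u v l}, DiwalkFrom A u v l → l.Nodup)
    (v : V) : ∃ s l, IsSource A s ∧ DiwalkFrom A s v l := by
  by_contra! hnone
  have hlong : ∀ n : ℕ, ∃ s l, DiwalkFrom A s v l ∧ l.length = n + 1 := by
    intro n
    induction n with
    | zero => exact ⟨v, [v], .singleton v, rfl⟩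
    | succ n ih =>
      obtain ⟨s, l, hl, hlen⟩ := ih
      obtain ⟨a, ha⟩ : ∃ a, A a s := by
        simpa [IsSource] using fun hs => hnone s l hs hl
      exact ⟨a, a :: l, hl.cons ha, by simp [hlen]⟩
  obtain ⟨s, l, hl, hlen⟩ := hlong (Fintype.card V)
  have := (hnodup hl).length_le_card
  omega

lemma exists_isSink_diwalkFrom [Fintype V] (hnodup : ∀ {u v l}, DiwalkFrom A u v l → l.Nodup)
    (u : V) : ∃ t l, IsSink A t ∧ DiwalkFrom A u t l := by
  obtain ⟨t, l, ht, hl⟩ :=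
    exists_isSource_diwalkFrom (A := flip A) (fun h => List.nodup_reverse.1 (hnodup h.reverse)) u
  exact ⟨t, l.reverse, ht, hl.reverse⟩

lemma exists_diwalkFrom_isSource_isSink_mem [Fintype V]
    (hnodup : ∀ {u v l}, DiwalkFrom A u v l → l.Nodup) (w : V) :
    ∃ s t l, IsSource A s ∧ IsSink A t ∧ DiwalkFrom A s t l ∧ w ∈ l := by
  obtain ⟨s, l₁, hs, hl₁⟩ := exists_isSource_diwalkFrom hnodup w
  obtain ⟨t, l₂, ht, hl₂⟩ := exists_isSink_diwalkFrom hnodup w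
  obtain ⟨l₂, rfl⟩ : ∃ l₂', l₂ = w :: l₂' := by
    obtain ⟨-, hw, -⟩ := diwalkFrom_iff.1 hl₂
    exact List.head?_eq_some_iff.1 hw
  refine ⟨s, t, l₁ ++ l₂, hs, ht, hl₁.append hl₂, List.mem_append_left _ ?_⟩
  exact List.mem_of_getLast? (diwalkFrom_iff.1 hl₁).2.2

end Digraph

section Hull

variable {A : V → V → Prop} {S T : Set V}

lemma geoInterval_mono (hST : S ⊆ T) : geoInterval A S ⊆ geoInterval A T := by
  rintro x (hx | ⟨a, ha, b, hb, l, hl, hxl⟩)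
  · exact Or.inl (hST hx)
  · exact Or.inr ⟨a, hST ha, b, hST hb, l, hl, hxl⟩

lemma geoInterval_subset_geoHull : geoInterval A S ⊆ geoHull A S :=
  Set.subset_sInter fun _ ⟨hST, hT⟩ => hT ▸ geoInterval_mono hST

lemma geoHull_subset (hST : S ⊆ T) (hT : GeoConvex A T) : geoHull A S ⊆ T :=
  Set.sInter_subset_of_mem ⟨hST, hT⟩

lemma IsGeodeticSet.isHullSet (hS : IsGeodeticSet A S) : IsHullSet A S :=
  Set.eq_univ_of_univ_subset (hS ▸ geoInterval_subset_geoHull)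

lemma IsExtremeVtx.geoConvex_compl_singleton {w : V} (hw : IsExtremeVtx A w) :
    GeoConvex A {w}ᶜ := by
  refine subset_antisymm ?_ Set.subset_union_left
  rintro x (hx | ⟨a, ha, b, hb, l, hl, hxl⟩)
  · exact hx
  · rintro rfl
    rcases hw.eq_or_eq_of_mem_geodesic hl hxl with rfl | rfl
    exacts [ha rfl, hb rfl]

lemma IsHullSet.setOf_isExtremeVtx_subset (hS : IsHullSet A S) :
    {v | IsExtremeVtx A v} ⊆ S := by
  intro w hw
  by_contra hwS
  have hhull := geoHull_subset (Set.subset_compl_singleton_iff.2 hwS) hw.geoConvex_compl_singleton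
  rw [hS] at hhull
  exact hhull (Set.mem_univ w) rfl

lemma sInf_ncard_eq_ncard_of_least [Finite V] {P : Set V → Prop} {E : Set V} (hE : P E)
    (hleast : ∀ S, P S → E ⊆ S) :
    sInf {n | ∃ S : Set V, S.Finite ∧ S.ncard = n ∧ P S} = E.ncard := by
  refine le_antisymm (Nat.sInf_le ⟨E, E.toFinite, rfl, hE⟩)
    (le_csInf ⟨_, E, E.toFinite, rfl, hE⟩ ?_)
  rintro _ ⟨S, hS, rfl, hPS⟩
  exact Set.ncard_le_ncard (hleast S hPS) hS

end Hull

section OrientedForest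

open SimpleGraph

variable {G : SimpleGraph V} {A : V → V → Prop} {u v : V} {l : List V}

lemma SimpleGraph.IsAcyclic.length_eq_dist_of_isPath (hG : G.IsAcyclic) {p : G.Walk u v}
    (hp : p.IsPath) : p.length = G.dist u v := by
  obtain ⟨q, hq, hqd⟩ := p.reachable.exists_path_of_dist
  have hpq : p = q := congrArg Subtype.val ((hG.subsingleton_path u v).elim ⟨p, hp⟩ ⟨q, hq⟩)
  rw [← hqd, hpq]

lemma SimpleGraph.Walk.isChain_ne_edges_of_isChain_support (hA : Oriented A) :
    ∀ {u v : V} (p : G.Walk u v), p.support.IsChain A → p.edges.IsChain (· ≠ ·)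
  | _, _, .nil, _ => List.IsChain.nil
  | _, _, .cons _ .nil, _ => List.isChain_singleton _
  | _, _, .cons hab (.cons (v := c) _ p), hc => by
    have hchain := hc
    rw [Walk.support_cons, Walk.support_cons, ← p.cons_tail_support, List.isChain_cons_cons,
      List.isChain_cons_cons] at hchain
    obtain ⟨hAab, hAbc, -⟩ := hchain
    rw [Walk.edges_cons]
    refine List.isChain_cons.2
      ⟨fun e he => ?_, isChain_ne_edges_of_isChain_support hA _ hc.tail⟩
    rw [Walk.edges_cons, List.head?_cons, Option.mem_some_iff] at he
    subst he
    intro he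
    rcases Sym2.eq_iff.1 he with ⟨rfl, -⟩ | ⟨rfl, -⟩
    exacts [hab.ne rfl, hA _ _ hAab hAbc]

namespace DiwalkFrom

lemma exists_walk_support_eq (hAG : ∀ a b, A a b → G.Adj a b) (h : DiwalkFrom A u v l) :
    ∃ p : G.Walk u v, p.support = l := by
  obtain ⟨hc, hu, hv⟩ := diwalkFrom_iff.1 h
  have hne : l ≠ [] := by rintro rfl; simp at hu
  rw [List.head?_eq_some_head hne, Option.some_inj] at hu
  rw [List.getLast?_eq_some_getLast hne, Option.some_inj] at hv
  exact ⟨(Walk.ofSupport l hne (hc.imp fun a b => hAG a b)).copy hu hv, by simp⟩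

lemma exists_isPath (hG : G.IsAcyclic) (hA : Oriented A) (hAG : ∀ a b, A a b → G.Adj a b)
    (h : DiwalkFrom A u v l) : ∃ p : G.Walk u v, p.IsPath ∧ p.support = l := by
  obtain ⟨p, rfl⟩ := h.exists_walk_support_eq hAG
  exact ⟨p, (hG.isPath_iff_isChain p).2
    (p.isChain_ne_edges_of_isChain_support hA (diwalkFrom_iff.1 h).1), rfl⟩

lemma nodup (hG : G.IsAcyclic) (hA : Oriented A) (hAG : ∀ a b, A a b → G.Adj a b)
    (h : DiwalkFrom A u v l) : l.Nodup := by
  obtain ⟨p, hp, rfl⟩ := h.exists_isPath hG hA hAG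
  exact hp.support_nodup

lemma isGeodesic (hG : G.IsAcyclic) (hA : Oriented A) (hAG : ∀ a b, A a b → G.Adj a b)
    (h : DiwalkFrom A u v l) : IsGeodesic A u v l := by
  have hlen : ∀ {l'}, DiwalkFrom A u v l' → l'.length = G.dist u v + 1 := fun h' => by
    obtain ⟨p, hp, rfl⟩ := h'.exists_isPath hG hA hAG
    rw [Walk.length_support, hG.length_eq_dist_of_isPath hp]
  exact ⟨h, fun _ h' => ((hlen h).trans (hlen h').symm).le⟩

end DiwalkFrom

lemma isGeodeticSet_setOf_isExtremeVtx [Fintype V] (hG : G.IsAcyclic) (hA : Oriented A)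
    (hAG : ∀ a b, A a b → G.Adj a b) :
    IsGeodeticSet A {v | IsExtremeVtx A v} := by
  refine Set.eq_univ_of_forall fun w => Or.inr ?_
  obtain ⟨s, t, l, hs, ht, hl, hw⟩ :=
    exists_diwalkFrom_isSource_isSink_mem (fun h => h.nodup hG hA hAG) w
  exact ⟨s, Or.inl hs, t, Or.inr (Or.inl ht), l, hl.isGeodesic hG hA hAG, hw⟩

end OrientedForest

/-- in an oriented tree, the extreme vertices form the unique minimum
hull set and the unique minimum geodetic set; `I(ext(D)) = V(D)` and
`ohn(D) = ogn(D) = |ext(D)|`. -/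
theorem stmt_11 [Fintype V] (G : SimpleGraph V) (hT : G.IsTree)
    (A : V → V → Prop) (hA : Oriented A)
    (horient : ∀ u v, G.Adj u v ↔ (A u v ∨ A v u)) :
    IsGeodeticSet A {v | IsExtremeVtx A v} ∧
    IsHullSet A {v | IsExtremeVtx A v} ∧
    (∀ S : Set V, IsHullSet A S → {v | IsExtremeVtx A v} ⊆ S) ∧
    (∀ S : Set V, IsGeodeticSet A S → {v | IsExtremeVtx A v} ⊆ S) ∧
    hullNumber A = ({v | IsExtremeVtx A v} : Set V).ncard ∧
    geodeticNumber A = ({v | IsExtremeVtx A v} : Set V).ncard := by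
  have hgeo :=
    isGeodeticSet_setOf_isExtremeVtx hT.isAcyclic hA fun a b h => (horient a b).2 (.inl h)
  have hleast : ∀ S : Set V, IsHullSet A S → {v | IsExtremeVtx A v} ⊆ S :=
    fun _ hS => hS.setOf_isExtremeVtx_subset
  exact ⟨hgeo, hgeo.isHullSet, hleast, fun S hS => hleast S hS.isHullSet,
    sInf_ncard_eq_ncard_of_least hgeo.isHullSet hleast,
    sInf_ncard_eq_ncard_of_least hgeo fun S hS => hleast S hS.isHullSet⟩
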